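/- Let (O,g,f) be an oriented matroid program and X, Y comodular cocircuits with X_f = Y_f = X_g = Y_g ≠ 0. Then X →_{g,f} Y if and only if X ←_{f,g} Y; i.e., the direction of the edge reverses when the roles of the objective f and the hyperplane at infinity g are interchanged. -/

import Mathlib

open Set

variable {E : Type*}

/-- Support of a sign vector. -/
def supp (X : E → SignType) : Set E := {e | X e ≠ 0}

/-- Zero set of a sign vector. -/
def zset (X : E → SignType) : Set E := {e | X e = 0}

/-- Composition of sign vectors: first nonzero entry wins. -/
def scomp (X Y : E → SignType) : E → SignType := fun e => if X e ≠ 0 then X e else Y e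

/-- Separation set of two sign vectors. -/
def ssep (X Y : E → SignType) : Set E := {e | X e ≠ 0 ∧ X e = -Y e}

/-- `G` covers `F` in the lattice of flats of `M`. -/
def Matroid.FlatCovBy (M : Matroid E) (F G : Set E) : Prop :=
  M.IsFlat F ∧ M.IsFlat G ∧ F ⊂ G ∧ ∀ F', M.IsFlat F' → F ⊆ F' → F' ⊆ G → F' = F ∨ F' = G

/-- A hyperplane: a flat covered by the ground set (corank 1 flat). -/
def Matroid.IsHyperplane (M : Matroid E) (H : Set E) : Prop := M.FlatCovBy H M.E

/-- A coline: a flat of corank 2. -/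
def Matroid.IsColine (M : Matroid E) (F : Set E) : Prop :=
  ∃ H, M.FlatCovBy F H ∧ M.IsHyperplane H

/-- A coplane: a flat of corank 3. -/
def Matroid.IsCoplane (M : Matroid E) (F : Set E) : Prop :=
  ∃ G, M.FlatCovBy F G ∧ M.IsColine G

/-- An oriented matroid, given by its set of cocircuits (sign vectors satisfying the
cocircuit axioms), bundled with its underlying matroid, whose hyperplanes are exactly
the zero sets of the cocircuits. -/
structure OM (E : Type*) where
  M : Matroid E
  ground_eq : M.E = Set.univ
  cocircuits : Set (E → SignType)
  zero_not_mem : (0 : E → SignType) ∉ cocircuits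
  neg_mem : ∀ X ∈ cocircuits, -X ∈ cocircuits
  supp_incomp : ∀ X ∈ cocircuits, ∀ Y ∈ cocircuits, supp X ⊆ supp Y → X = Y ∨ X = -Y
  elim_ax : ∀ X ∈ cocircuits, ∀ Y ∈ cocircuits, X ≠ -Y → ∀ e ∈ ssep X Y,
      ∃ Z ∈ cocircuits, Z e = 0 ∧ ∀ f, Z f = X f ∨ Z f = Y f ∨ Z f = 0
  hyperplane_iff : ∀ H : Set E, M.IsHyperplane H ↔ ∃ X ∈ cocircuits, zset X = H

/-- Covectors: the zero vector together with compositions of cocircuits. -/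
def OM.IsCovector (O : OM E) (X : E → SignType) : Prop :=
  X = 0 ∨ ∃ L : List (E → SignType), L ≠ [] ∧ (∀ Y ∈ L, Y ∈ O.cocircuits) ∧ X = L.foldr scomp 0

/-- An edge: a covector whose zero set is a coline of the underlying matroid. -/
def OM.IsEdge (O : OM E) (F : E → SignType) : Prop := O.IsCovector F ∧ O.M.IsColine (zset F)

/-- Two cocircuits are comodular iff their composition is an edge, i.e. its zero set
is a coline. -/
def OM.Comod (O : OM E) (X Y : E → SignType) : Prop := O.M.IsColine (zset (scomp X Y))

def OM.IsLoopE (O : OM E) (e : E) : Prop := ¬ O.M.Indep {e}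

def OM.IsColoopE (O : OM E) (e : E) : Prop := ∀ B, O.M.IsBase B → e ∈ B

/-- `Z` is the result of cocircuit elimination of `g` between `-X` and `Y`:
a cocircuit vanishing at `g` with support inside `supp((-X) ∘ Y) \ {g}`. -/
def OM.ElimWit (O : OM E) (g : E) (X Y Z : E → SignType) : Prop :=
  Z ∈ O.cocircuits ∧ Z g = 0 ∧ supp Z ⊆ supp (scomp (-X) Y) \ {g}

/-- The direction of the pair `(X,Y)` in the program `(O,g,f)` is `s`:
eliminating `g` between `-X` and `Y` yields `Z` with `Z f = s`. -/
def OM.DirIs (O : OM E) (g f : E) (X Y : E → SignType) (s : SignType) : Prop :=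
  ∃ Z, O.ElimWit g X Y Z ∧ Z f = s

section Aux

variable {M : Matroid E}

lemma flat_closure (M : Matroid E) (X : Set E) : M.IsFlat (M.closure X) := by
  have hne : Nonempty {F // M.IsFlat F ∧ X ∩ M.E ⊆ F} :=
    ⟨⟨M.E, M.ground_isFlat, inter_subset_right⟩⟩
  have h := Matroid.IsFlat.iInter (M := M)
    (Fs := fun F : {F // M.IsFlat F ∧ X ∩ M.E ⊆ F} => F.1)
    (fun F => F.2.1)
  convert h using 1
  rw [Matroid.closure_def, sInter_eq_iInter]
  exact iInter_congr fun F => rfl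

lemma bases_diff_encard_eq {B1 B2 I : Set E} (hB1 : M.IsBase B1) (hB2 : M.IsBase B2)
    (h1 : I ⊆ B1) (h2 : I ⊆ B2) : (B1 \ I).encard = (B2 \ I).encard := by
  have hd1 : B1 \ I = (B1 \ B2) ∪ ((B1 ∩ B2) \ I) := by
    ext x
    simp only [mem_diff, mem_union, mem_inter_iff]
    constructor
    · rintro ⟨hx, hxI⟩
      by_cases h : x ∈ B2
      · exact Or.inr ⟨⟨hx, h⟩, hxI⟩
      · exact Or.inl ⟨hx, h⟩
    · rintro (⟨hx, hx2⟩ | ⟨⟨hx, _⟩, hxI⟩)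
      · exact ⟨hx, fun hI => hx2 (h2 hI)⟩
      · exact ⟨hx, hxI⟩
  have hd2 : B2 \ I = (B2 \ B1) ∪ ((B1 ∩ B2) \ I) := by
    ext x
    simp only [mem_diff, mem_union, mem_inter_iff]
    constructor
    · rintro ⟨hx, hxI⟩
      by_cases h : x ∈ B1
      · exact Or.inr ⟨⟨h, hx⟩, hxI⟩
      · exact Or.inl ⟨hx, h⟩
    · rintro (⟨hx, hx1⟩ | ⟨⟨_, hx⟩, hxI⟩)
      · exact ⟨hx, fun hI => hx1 (h1 hI)⟩
      · exact ⟨hx, hxI⟩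
  have hdisj1 : Disjoint (B1 \ B2) ((B1 ∩ B2) \ I) :=
    disjoint_left.2 fun x hx hx' => hx.2 hx'.1.2
  have hdisj2 : Disjoint (B2 \ B1) ((B1 ∩ B2) \ I) :=
    disjoint_left.2 fun x hx hx' => hx.2 hx'.1.1
  rw [hd1, hd2, encard_union_eq hdisj1, encard_union_eq hdisj2,
    hB1.encard_diff_comm hB2]

lemma covby_closure_insert (hground : M.E = univ) {A B : Set E} (hAB : M.FlatCovBy A B)
    {x : E} (hxB : x ∈ B) (hxA : x ∉ A) : M.closure (insert x A) = B := by
  obtain ⟨hA, hB, hsub, hcov⟩ := hAB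
  have hsub2 : insert x A ⊆ B := insert_subset hxB hsub.subset
  have h1 : M.closure (insert x A) ⊆ B := by
    have := M.closure_subset_closure hsub2
    rwa [hB.closure] at this
  have h2 : insert x A ⊆ M.closure (insert x A) :=
    M.subset_closure _ (by rw [hground]; exact subset_univ _)
  rcases hcov _ (flat_closure M _) ((subset_insert x A).trans h2) h1 with h | h
  · exact absurd (h ▸ h2 (mem_insert x A)) hxA
  · exact h

lemma coline_hyperplane_unique (hground : M.E = univ) {L : Set E} (hL : M.IsColine L)
    {e : E} (he : e ∉ L) {H1 H2 : Set E} (hH1 : M.IsHyperplane H1) (hH2 : M.IsHyperplane H2)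
    (hs1 : insert e L ⊆ H1) (hs2 : insert e L ⊆ H2) : H1 = H2 := by
  obtain ⟨H0, hLH0, hH0⟩ := hL
  suffices hF : ∀ H, M.IsHyperplane H → insert e L ⊆ H → H = M.closure (insert e L) by
    rw [hF H1 hH1 hs1, hF H2 hH2 hs2]
  intro H hH hsub
  have hLflat : M.IsFlat L := hLH0.1
  have hHflat : M.IsFlat H := hH.1
  set F := M.closure (insert e L) with hFdef
  have hFH : F ⊆ H := by
    have := M.closure_subset_closure hsub
    rwa [hHflat.closure] at this
  by_contra hne
  have hFH' : F ⊂ H := hFH.ssubset_of_ne (Ne.symm hne)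
  obtain ⟨y, hyH, hyF⟩ := exists_of_ssubset hFH'
  have hLE : L ⊆ M.E := by rw [hground]; exact subset_univ _
  obtain ⟨I, hI⟩ := M.exists_isBasis L hLE
  have hclI : M.closure I = L := by rw [hI.closure_eq_closure, hLflat.closure]
  obtain ⟨a, haH0, haL⟩ := exists_of_ssubset hLH0.2.2.1
  obtain ⟨b, hbE, hbH0⟩ := exists_of_ssubset hH0.2.2.1
  have hLH0sub : L ⊆ H0 := hLH0.2.2.1.subset
  -- insert a I is independent with closure H0
  have haI : a ∉ I := fun h => haL (hI.subset h)
  have haIindep : M.Indep (insert a I) := by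
    rw [hI.indep.insert_indep_iff_of_notMem haI]
    exact ⟨by rw [hground]; trivial, by rw [hclI]; exact haL⟩
  have hclaI : M.closure (insert a I) = H0 := by
    rw [← M.closure_insert_closure_eq_closure_insert, hclI]
    exact covby_closure_insert hground hLH0 haH0 haL
  -- insert b (insert a I) is a base
  have hbaI : b ∉ insert a I := fun h => hbH0 (hclaI ▸ M.subset_closure _
    (haIindep.subset_ground) h)
  have hbIndep : M.Indep (insert b (insert a I)) := by
    rw [haIindep.insert_indep_iff_of_notMem hbaI]
    exact ⟨by rw [hground]; trivial, by rw [hclaI]; exact hbH0⟩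
  have hK1base : M.IsBase (insert b (insert a I)) := by
    refine hbIndep.isBase_of_ground_subset_closure ?_
    rw [← M.closure_insert_closure_eq_closure_insert, hclaI]
    rw [covby_closure_insert hground hH0 (by rw [hground]; trivial) hbH0]
  -- insert y (insert e I) is independent, inside H
  have heL : e ∉ L := he
  have heI : e ∉ I := fun h => heL (hI.subset h)
  have heIindep : M.Indep (insert e I) := by
    rw [hI.indep.insert_indep_iff_of_notMem heI]
    exact ⟨by rw [hground]; trivial, by rw [hclI]; exact heL⟩
  have hcleI : M.closure (insert e I) = F := by
    rw [hFdef, ← M.closure_insert_closure_eq_closure_insert, hclI]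
  have hyeI : y ∉ insert e I := fun h => hyF (hcleI ▸ M.subset_closure _
    (heIindep.subset_ground) h)
  have hK2indep : M.Indep (insert y (insert e I)) := by
    rw [heIindep.insert_indep_iff_of_notMem hyeI]
    exact ⟨by rw [hground]; trivial, by rw [hcleI]; exact hyF⟩
  obtain ⟨B, hB, hK2B⟩ := hK2indep.exists_isBase_superset
  have hK2H : insert y (insert e I) ⊆ H := by
    refine insert_subset hyH (insert_subset (hsub (mem_insert e L)) ?_)
    exact hI.subset.trans (fun x hx => hsub (mem_insert_of_mem e hx))
  have hK2ne : insert y (insert e I) ≠ B := by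
    intro h
    have : M.closure B ⊆ H := by
      rw [← h]
      have := M.closure_subset_closure hK2H
      rwa [hHflat.closure] at this
    rw [hB.closure_eq] at this
    exact hH.2.2.1.ne ((hHflat.subset_ground).antisymm this)
  obtain ⟨z, hzB, hzK2⟩ := exists_of_ssubset (hK2B.ssubset_of_ne hK2ne)
  -- cardinality contradiction
  have hIK1 : I ⊆ insert b (insert a I) := (subset_insert a I).trans (subset_insert _ _)
  have hIB : I ⊆ B := ((subset_insert e I).trans (subset_insert _ _)).trans hK2B
  have hcards := bases_diff_encard_eq hK1base hB hIK1 hIB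
  have hbI : b ∉ I := fun h => hbaI (mem_insert_of_mem a h)
  have hK1I : insert b (insert a I) \ I = {b, a} := by
    ext x
    simp only [mem_diff, mem_insert_iff, mem_singleton_iff]
    constructor
    · rintro ⟨(rfl | rfl | hx), hxI⟩
      · exact Or.inl rfl
      · exact Or.inr rfl
      · exact absurd hx hxI
    · rintro (rfl | rfl)
      · exact ⟨Or.inl rfl, hbI⟩
      · exact ⟨Or.inr (Or.inl rfl), haI⟩
  have hba : b ≠ a := fun h => hbH0 (h ▸ haH0)
  have h2card : (insert b (insert a I) \ I).encard = 2 := by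
    rw [hK1I]; exact encard_pair hba
  have heF : e ∈ F := M.subset_closure _ (by rw [hground]; exact subset_univ _) (mem_insert e L)
  have hLF : L ⊆ F := (subset_insert e L).trans
    (M.subset_closure _ (by rw [hground]; exact subset_univ _))
  have hyI : y ∉ I := fun h => hyF (hLF (hI.subset h))
  have heyz : ({e, y, z} : Set E) ⊆ B \ I := by
    rw [insert_subset_iff, insert_subset_iff, singleton_subset_iff]
    refine ⟨⟨hK2B (mem_insert_of_mem y (mem_insert e I)), heI⟩,
      ⟨hK2B (mem_insert y _), hyI⟩,
      ⟨hzB, fun h => hzK2 (mem_insert_of_mem y (mem_insert_of_mem e h))⟩⟩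
  have hey : e ≠ y := fun h => hyF (h ▸ heF)
  have hez : e ≠ z := fun h => hzK2 (h ▸ mem_insert_of_mem y (mem_insert e I))
  have hyz : y ≠ z := fun h => hzK2 (h ▸ mem_insert y _)
  have h3card : (3 : ℕ∞) ≤ (B \ I).encard := by
    have h3 : ({e, y, z} : Set E).encard = 3 := by
      rw [encard_insert_of_notMem (by simp [hey, hez]), encard_pair hyz]; rfl
    exact h3 ▸ encard_le_encard heyz
  rw [← hcards, h2card] at h3card
  norm_num at h3card


end Aux

-- sign vector lemmas
lemma supp_eq_compl_zset (X : E → SignType) : supp X = (zset X)ᶜ := by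
  ext e; simp [supp, zset]

lemma signType_neg_eq_zero (s : SignType) : -s = 0 ↔ s = 0 := by
  cases s <;> decide

lemma zset_neg (X : E → SignType) : zset (-X) = zset X := by
  ext e; exact signType_neg_eq_zero (X e)

lemma scomp_eq_zero (A B : E → SignType) (x : E) :
    scomp A B x = 0 ↔ A x = 0 ∧ B x = 0 := by
  by_cases h : A x = 0 <;> simp [scomp, h]

lemma zset_scomp (A B : E → SignType) : zset (scomp A B) = zset A ∩ zset B := by
  ext x; simp [zset, scomp_eq_zero, mem_inter_iff]

lemma elim_supp_iff (X Y Z : E → SignType) (g : E) :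
    supp Z ⊆ supp (scomp (-X) Y) \ {g} ↔ Z g = 0 ∧ zset X ∩ zset Y ⊆ zset Z := by
  constructor
  · intro h
    constructor
    · by_contra hg
      exact (h hg).2 rfl
    · intro x hx
      by_contra hZ
      have hh := (h hZ).1
      have : scomp (-X) Y x = 0 := by
        rw [scomp_eq_zero]
        refine ⟨?_, hx.2⟩
        have hXx : X x = 0 := hx.1
        show -(X x) = 0
        rw [hXx]; rfl
      exact hh this
  · rintro ⟨hg, hsub⟩ x hx
    constructor
    · intro h0'
      rw [scomp_eq_zero] at h0'
      have hXx : X x = 0 := (signType_neg_eq_zero (X x)).1 h0'.1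
      exact hx (hsub ⟨hXx, h0'.2⟩)
    · rintro rfl
      exact hx hg

lemma zset_eq_of_hyp (O : OM E) {L : Set E} (hL : O.M.IsColine L) {q : E} (hqL : q ∉ L)
    {W Z : E → SignType} (hW : W ∈ O.cocircuits) (hZ : Z ∈ O.cocircuits)
    (hWq : W q = 0) (hZq : Z q = 0) (hLW : L ⊆ zset W) (hLZ : L ⊆ zset Z) :
    W = Z ∨ W = -Z := by
  have hyW : O.M.IsHyperplane (zset W) := (O.hyperplane_iff _).2 ⟨W, hW, rfl⟩
  have hyZ : O.M.IsHyperplane (zset Z) := (O.hyperplane_iff _).2 ⟨Z, hZ, rfl⟩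
  have heq : zset W = zset Z :=
    coline_hyperplane_unique O.ground_eq hL hqL hyW hyZ
      (insert_subset hWq hLW) (insert_subset hZq hLZ)
  have hsupp : supp W ⊆ supp Z := by
    rw [supp_eq_compl_zset, supp_eq_compl_zset, heq]
  exact O.supp_incomp W hW Z hZ hsupp

lemma OM.key (O : OM E) {p q : E} {L : Set E} (hL : O.M.IsColine L) (hqL : q ∉ L)
    {A Z : E → SignType} (hA : A ∈ O.cocircuits) (hAp : A p = -1) (hAq : A q = -1)
    (hLA : L ⊆ zset A) (hZ : Z ∈ O.cocircuits) (hZq : Z q = 0) (hZp : Z p = 1)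
    (hLZ : L ⊆ zset Z) : ∃ W ∈ O.cocircuits, W p = 0 ∧ W q = -1 ∧ L ⊆ zset W := by
  have hne : Z ≠ -A := by
    intro h
    rw [h] at hZq
    simp only [Pi.neg_apply, hAq] at hZq
    exact absurd hZq (by decide)
  have hp : p ∈ ssep Z A := ⟨by rw [hZp]; decide, by rw [hZp, hAp]; decide⟩
  obtain ⟨W, hW, hWp, hWall⟩ := O.elim_ax Z hZ A hA hne p hp
  have hLW : L ⊆ zset W := fun x hx => by
    rcases hWall x with h | h | h
    · show W x = 0; rw [h]; exact hLZ hx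
    · show W x = 0; rw [h]; exact hLA hx
    · exact h
  refine ⟨W, hW, hWp, ?_, hLW⟩
  have hWq : W q = 0 ∨ W q = -1 := by
    rcases hWall q with h | h | h
    · exact Or.inl (by rw [h, hZq])
    · exact Or.inr (by rw [h, hAq])
    · exact Or.inl h
  rcases hWq with h | h
  · exfalso
    rcases zset_eq_of_hyp O hL hqL hW hZ h hZq hLW hLZ with h' | h'
    · rw [h'] at hWp
      rw [hWp] at hZp
      exact absurd hZp (by decide)
    · rw [h'] at hWp
      simp only [Pi.neg_apply, hZp] at hWp
      exact absurd hWp (by decide)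
  · exact h

theorem dir_swap_fg' (O : OM E) (g f : E) (hgf : g ≠ f)
    (hg : ¬ O.IsLoopE g) (hf : ¬ O.IsColoopE f)
    (X Y : E → SignType) (hX : X ∈ O.cocircuits) (hY : Y ∈ O.cocircuits)
    (hcm : O.Comod X Y) (h1 : X f = Y f) (h2 : X f = X g) (h3 : X g = Y g)
    (h0 : X g ≠ 0) :
    O.DirIs g f X Y 1 ↔ O.DirIs f g X Y (-1) := by
  have hL : O.M.IsColine (zset X ∩ zset Y) := by
    have := hcm
    rwa [OM.Comod, zset_scomp] at this
  set L := zset X ∩ zset Y with hLdef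
  have hXf : X f ≠ 0 := by rw [h2]; exact h0
  have hfL : f ∉ L := fun h => hXf h.1
  have hgL : g ∉ L := fun h => h0 h.1
  have hLX : L ⊆ zset X := inter_subset_left
  obtain ⟨A, hA, hAf, hAg, hLA⟩ :
      ∃ A ∈ O.cocircuits, A f = -1 ∧ A g = -1 ∧ L ⊆ zset A := by
    cases hs : X g with
    | zero => exact absurd hs h0
    | pos =>
      refine ⟨-X, O.neg_mem X hX, ?_, ?_, by rw [zset_neg]; exact hLX⟩
      · show -(X f) = -1; rw [h2, hs]; rfl
      · show -(X g) = -1; rw [hs]; rfl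
    | neg =>
      exact ⟨X, hX, by rw [h2, hs]; rfl, by rw [hs]; rfl, hLX⟩
  constructor
  · rintro ⟨Z, ⟨hZc, hZg, hZsupp⟩, hZf⟩
    have hLZ : L ⊆ zset Z := ((elim_supp_iff X Y Z g).1 hZsupp).2
    obtain ⟨W, hWc, hWf, hWg, hLW⟩ :=
      O.key hL hgL hA hAf hAg hLA hZc hZg hZf hLZ
    exact ⟨W, ⟨hWc, hWf, (elim_supp_iff X Y W f).2 ⟨hWf, hLW⟩⟩, hWg⟩
  · rintro ⟨W, ⟨hWc, hWf, hWsupp⟩, hWg⟩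
    have hLW : L ⊆ zset W := ((elim_supp_iff X Y W f).1 hWsupp).2
    have hnWg : (-W) g = 1 := by simp only [Pi.neg_apply, hWg]; rfl
    have hnWf : (-W) f = 0 := by simp only [Pi.neg_apply, hWf]; rfl
    have hLnW : L ⊆ zset (-W) := by rw [zset_neg]; exact hLW
    obtain ⟨W', hW'c, hW'g, hW'f, hLW'⟩ :=
      O.key hL hfL hA hAg hAf hLA (O.neg_mem W hWc) hnWf hnWg hLnW
    refine ⟨-W', ⟨O.neg_mem W' hW'c, by simp only [Pi.neg_apply, hW'g]; rfl,
      (elim_supp_iff X Y (-W') g).2 ⟨by simp only [Pi.neg_apply, hW'g]; rfl, by rw [zset_neg]; exact hLW'⟩⟩,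
      by simp only [Pi.neg_apply, hW'f]; rfl⟩

/-- with `X_f = Y_f = X_g = Y_g ≠ 0`, the direction reverses when the
objective and the hyperplane at infinity are interchanged. -/
theorem dir_swap_fg (O : OM E) (g f : E) (hgf : g ≠ f)
    (hg : ¬ O.IsLoopE g) (hf : ¬ O.IsColoopE f)
    (X Y : E → SignType) (hX : X ∈ O.cocircuits) (hY : Y ∈ O.cocircuits)
    (hcm : O.Comod X Y) (h1 : X f = Y f) (h2 : X f = X g) (h3 : X g = Y g)
    (h0 : X g ≠ 0) :
    O.DirIs g f X Y 1 ↔ O.DirIs f g X Y (-1) :=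
  dir_swap_fg' O g f hgf hg hf X Y hX hY hcm h1 h2 h3 h0
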